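/- arXiv:1705.06958 — 8 statements merged into one kernel-verified Lean document; each statement's English description precedes it below -/
import Mathlib

section
/- If A is a skew brace such that λ_a(a) = a for all a ∈ A, then A is a two-sided skew brace, i.e., (a·b)∘c = (a∘c)·c⁻¹·(b∘c) for all a,b,c ∈ A. -/
/-!
Since `λ_a` is an automorphism of `(A,·)`, `λ_a(a) = a` forces `λ_a(a⁻¹) = a⁻¹`, i.e. `a ∘ a⁻¹ = 1`:
the two operations have the same inverses. Inversion is then an anti-automorphism of `(A,∘)`,
and conjugating the left compatibility law by it yields the right one.
-/

/-- A skew brace: a set `A` with two group operations, the "additive" one given by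
the ambient `Group A` instance (written multiplicatively, `·`), and a second group
operation `circ` (`∘`) with identity `cone` and inverses `cinv`, satisfying the
compatibility `a ∘ (b · c) = (a ∘ b) · a⁻¹ · (a ∘ c)`. -/
structure SkewBrace (A : Type*) [Group A] where
  circ : A → A → A
  circ_assoc : ∀ a b c : A, circ (circ a b) c = circ a (circ b c)
  cone : A
  cone_circ : ∀ a : A, circ cone a = a
  circ_cone : ∀ a : A, circ a cone = a
  cinv : A → A
  cinv_circ : ∀ a : A, circ (cinv a) a = cone
  circ_cinv : ∀ a : A, circ a (cinv a) = cone
  compat : ∀ a b c : A, circ a (b * c) = circ a b * a⁻¹ * circ a c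

namespace SkewBrace

variable {A : Type*} [Group A] (B : SkewBrace A)

def lambda (a b : A) : A := a⁻¹ * B.circ a b

def IsTwoSided : Prop :=
  ∀ a b c : A, B.circ (a * b) c = B.circ a c * c⁻¹ * B.circ b c

theorem circ_one (a : A) : B.circ a 1 = a := by
  have h := B.compat a 1 1
  rw [one_mul, mul_assoc, left_eq_mul, inv_mul_eq_one] at h
  exact h.symm

theorem cone_eq_one : B.cone = 1 := by
  simpa only [circ_one] using B.cone_circ 1

theorem cinv_eq_of_circ_eq_cone {a b : A} (h : B.circ a b = B.cone) : B.cinv a = b := by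
  calc B.cinv a = B.circ (B.cinv a) (B.circ a b) := by rw [h, B.circ_cone]
    _ = b := by rw [← B.circ_assoc, B.cinv_circ, B.cone_circ]

theorem cinv_circ_rev (a b : A) : B.cinv (B.circ a b) = B.circ (B.cinv b) (B.cinv a) := by
  apply cinv_eq_of_circ_eq_cone
  rw [B.circ_assoc, ← B.circ_assoc b, B.circ_cinv, B.cone_circ, B.circ_cinv]

theorem circ_inv_self_of_lambda_self {a : A} (h : B.lambda a a = a) : B.circ a a⁻¹ = 1 := by
  have hsq : B.circ a a = a * a := inv_mul_eq_iff_eq_mul.mp h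
  have hcompat := B.compat a a a⁻¹
  rwa [mul_inv_cancel, circ_one, hsq, mul_inv_cancel_right, left_eq_mul] at hcompat

theorem cinv_eq_inv_of_lambda_self {a : A} (h : B.lambda a a = a) : B.cinv a = a⁻¹ :=
  B.cinv_eq_of_circ_eq_cone (by rw [B.circ_inv_self_of_lambda_self h, cone_eq_one])

theorem isTwoSided_of_cinv_eq_inv (h : ∀ a : A, B.cinv a = a⁻¹) : B.IsTwoSided := by
  have inv_circ : ∀ a b : A, (B.circ a b)⁻¹ = B.circ b⁻¹ a⁻¹ := by
    simpa only [h] using B.cinv_circ_rev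
  intro a b c
  apply inv_injective
  rw [inv_circ, mul_inv_rev, B.compat, ← inv_circ, ← inv_circ, inv_inv]
  group

end SkewBrace

/-- If `lambda_a a = a` for all `a`, then the skew brace is two-sided:
`(a·b) ∘ c = (a∘c) · c⁻¹ · (b∘c)`. -/
theorem skewBrace_twoSided_of_lambda_fix {A : Type*} [Group A] (B : SkewBrace A)
    (h : ∀ a : A, a⁻¹ * B.circ a a = a) :
    ∀ a b c : A, B.circ (a * b) c = B.circ a c * c⁻¹ * B.circ b c :=
  B.isTwoSided_of_cinv_eq_inv fun a => B.cinv_eq_inv_of_lambda_self (h a)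
end

section
/- Let A be a finite skew brace whose additive group (A,·) is nilpotent, and let A₁ be a Sylow p-subgroup of (A,·). Then A₁ is closed under ∘ and under ∘-inverses, hence is a sub-skew-brace of A. -/
theorem Subgroup.apply_mem_of_characteristic {G : Type*} [Group G] {H : Subgroup G}
    [H.Characteristic] (ϕ : G ≃* G) {g : G} (hg : g ∈ H) : ϕ g ∈ H :=
  characteristic_iff_le_comap.mp ‹_› ϕ hg

namespace SkewBrace

variable {A : Type*} [Group A] (B : SkewBrace A)

def lam (a : A) : A ≃* A where
  toFun b := a⁻¹ * B.circ a b
  invFun c := B.circ (B.cinv a) (a * c)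
  left_inv b := by
    simp only [mul_inv_cancel_left, ← B.circ_assoc, B.cinv_circ, B.cone_circ]
  right_inv c := by
    simp only [← B.circ_assoc, B.circ_cinv, B.cone_circ, inv_mul_cancel_left]
  map_mul' b c := by
    simp only [B.compat]
    group

theorem circ_eq_mul_lam (a b : A) : B.circ a b = a * B.lam a b :=
  (mul_inv_cancel_left a _).symm

theorem cinv_eq_lam_symm_inv (a : A) : B.cinv a = (B.lam a).symm a⁻¹ := by
  change B.cinv a = B.circ (B.cinv a) (a * a⁻¹)
  rw [mul_inv_cancel, B.circ_one]

variable {B} {H : Subgroup A} [H.Characteristic]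

theorem circ_mem_of_characteristic {a b : A} (ha : a ∈ H) (hb : b ∈ H) : B.circ a b ∈ H := by
  rw [circ_eq_mul_lam]
  exact mul_mem ha (Subgroup.apply_mem_of_characteristic _ hb)

theorem cinv_mem_of_characteristic {a : A} (ha : a ∈ H) : B.cinv a ∈ H := by
  rw [cinv_eq_lam_symm_inv]
  exact Subgroup.apply_mem_of_characteristic _ (inv_mem ha)

end SkewBrace

theorem Sylow.characteristic_of_isNilpotent {G : Type*} [Group G] [Finite G]
    (hnil : Group.IsNilpotent G) {p : ℕ} [Fact p.Prime] (P : Sylow p G) :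
    (P : Subgroup G).Characteristic := by
  have sylow_normal := (Group.isNilpotent_of_finite_tfae (G := G)).out 0 3
  exact P.characteristic_of_normal (sylow_normal.mp hnil p ‹_› P)

/-- In a finite skew brace with nilpotent additive group, every Sylow `p`-subgroup of
the additive group is closed under `∘` and `∘`-inverses, hence is a sub-skew-brace. -/
theorem skewBrace_sylow_subbrace {A : Type*} [Group A] [Finite A]
    (hnil : Group.IsNilpotent A) (B : SkewBrace A)
    (p : ℕ) (hp : p.Prime) (P : Sylow p A) :
    (∀ a ∈ P, ∀ b ∈ P, B.circ a b ∈ P) ∧ (∀ a ∈ P, B.cinv a ∈ P) := by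
  have : Fact p.Prime := ⟨hp⟩
  have := P.characteristic_of_isNilpotent hnil
  exact ⟨fun a ha b hb => SkewBrace.circ_mem_of_characteristic ha hb,
    fun a ha => SkewBrace.cinv_mem_of_characteristic ha⟩
end

section
/- Let A be a group admitting an exact factorization through subgroups B and C (i.e., A = BC and B ∩ C = 1). Define a∘a' = b·a'·c for a = b·c with b ∈ B, c ∈ C. Then (A,·,∘) is a skew brace whose multiplicative group (A,∘) is isomorphic to B × C. -/
namespace SkewBrace

variable {A G : Type*} [Group A] [Group G]

def ofEquiv (e : A ≃ G)
    (compat : ∀ a b c : A,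
      e.symm (e a * e (b * c)) = e.symm (e a * e b) * a⁻¹ * e.symm (e a * e c)) :
    SkewBrace A where
  circ a b := e.symm (e a * e b)
  circ_assoc a b c := by simp [mul_assoc]
  cone := e.symm 1
  cone_circ a := by simp
  circ_cone a := by simp
  cinv a := e.symm (e a)⁻¹
  cinv_circ a := by simp
  circ_cinv a := by simp
  compat := compat

theorem nonempty_mulEquiv_ofEquiv (e : A ≃ G)
    (compat : ∀ a b c : A,
      e.symm (e a * e (b * c)) = e.symm (e a * e b) * a⁻¹ * e.symm (e a * e c)) :
    Nonempty (@MulEquiv A G (Mul.mk (ofEquiv e compat).circ) _) :=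
  ⟨@MulEquiv.mk A G (Mul.mk _) _ e fun _ _ => e.apply_symm_apply _⟩

end SkewBrace

namespace Subgroup

variable {A : Type*} [Group A] {H K : Subgroup A}

theorem isComplement'_of_forall_exists_mul (hfac : ∀ a : A, ∃ b ∈ H, ∃ c ∈ K, a = b * c)
    (hint : H ⊓ K = ⊥) : H.IsComplement' K :=
  isComplement'_of_disjoint_and_mul_eq_univ (disjoint_iff.2 hint) <|
    Set.eq_univ_of_forall fun a => by
      obtain ⟨b, hb, c, hc, rfl⟩ := hfac a
      exact Set.mul_mem_mul hb hc

namespace IsComplement'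

variable (hHK : H.IsComplement' K)

theorem equiv_mul_of_mem {b c : A} (hb : b ∈ H) (hc : c ∈ K) :
    hHK.equiv (b * c) = (⟨b, hb⟩, ⟨c, hc⟩) :=
  hHK.equiv.eq_symm_apply.1 rfl

noncomputable def equivProdInv : A ≃ H × K :=
  hHK.equiv.trans ((Equiv.refl H).prodCongr (Equiv.inv K))

@[simp]
theorem equivProdInv_apply (a : A) :
    hHK.equivProdInv a = ((hHK.equiv a).1, (hHK.equiv a).2⁻¹) :=
  rfl

@[simp]
theorem equivProdInv_symm_apply (p : H × K) : hHK.equivProdInv.symm p = (p.1 : A) * (p.2 : A)⁻¹ :=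
  rfl

theorem equivProdInv_symm_mul (a a' : A) :
    hHK.equivProdInv.symm (hHK.equivProdInv a * hHK.equivProdInv a') =
      (hHK.equiv a).1 * a' * (hHK.equiv a).2 := by
  conv_rhs => rw [← hHK.equiv_fst_mul_equiv_snd a']
  simp [mul_assoc]

theorem equivProdInv_compat (a b c : A) :
    hHK.equivProdInv.symm (hHK.equivProdInv a * hHK.equivProdInv (b * c)) =
      hHK.equivProdInv.symm (hHK.equivProdInv a * hHK.equivProdInv b) * a⁻¹ *
        hHK.equivProdInv.symm (hHK.equivProdInv a * hHK.equivProdInv c) := by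
  have ha : a⁻¹ = ((hHK.equiv a).2 : A)⁻¹ * ((hHK.equiv a).1 : A)⁻¹ := by
    rw [← mul_inv_rev, hHK.equiv_fst_mul_equiv_snd]
  simp only [equivProdInv_symm_mul, ha]
  group

noncomputable def skewBrace : SkewBrace A :=
  SkewBrace.ofEquiv hHK.equivProdInv hHK.equivProdInv_compat

theorem skewBrace_circ_mul_of_mem {b c : A} (hb : b ∈ H) (hc : c ∈ K) (a' : A) :
    hHK.skewBrace.circ (b * c) a' = b * a' * c := by
  simp only [skewBrace, SkewBrace.ofEquiv, equivProdInv_symm_mul, hHK.equiv_mul_of_mem hb hc]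

end IsComplement'

end Subgroup

/-- If a group `A` admits an exact factorization through subgroups `H` and `K`, then
`(b·c) ∘ a' = b · a' · c` makes `A` a skew brace whose multiplicative group is
isomorphic to `H × K`. -/
theorem skewBrace_of_exact_factorization {A : Type*} [Group A] (H K : Subgroup A)
    (hfac : ∀ a : A, ∃ b ∈ H, ∃ c ∈ K, a = b * c)
    (hint : H ⊓ K = ⊥) :
    ∃ Br : SkewBrace A,
      (∀ b c a' : A, b ∈ H → c ∈ K → Br.circ (b * c) a' = b * a' * c) ∧
      Nonempty (@MulEquiv A (H × K) (Mul.mk Br.circ) _) := by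
  have hHK := Subgroup.isComplement'_of_forall_exists_mul hfac hint
  exact ⟨hHK.skewBrace, fun b c a' hb hc => hHK.skewBrace_circ_mul_of_mem hb hc a',
    SkewBrace.nonempty_mulEquiv_ofEquiv _ _⟩
end

section
/- Let R be a ring, S a subring and I a left ideal of R such that S ∩ I = 0, R = S + I, and both S and I are Jacobson radical rings (so (S,∘) and (I,∘) are groups under a∘b = a+b+ab). Then (R,∘) is a group and admits an exact factorization R = S∘I. -/
section CircleFactorization

variable {R : Type*} [NonUnitalRing R]

lemma isQuasiregular_iff_circle {a : R} :
    IsQuasiregular a ↔ ∃ b, a + b + a * b = 0 ∧ b + a + b * a = 0 := by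
  rw [isQuasiregular_iff]
  refine exists_congr fun b => ?_
  rw [add_comm b a, add_comm a b, and_comm]

theorem IsQuasiregular.circle {a b : R} (ha : IsQuasiregular a) (hb : IsQuasiregular b) :
    IsQuasiregular (a + b + a * b) := by
  rw [isQuasiregular_iff'] at *
  convert ha.mul hb using 1
  apply PreQuasiregular.equiv.symm.injective
  simp [add_comm a b]

/-- The `λ`-map of the brace `(R, +, ∘)`: `a ∘ x = a + circleLambda a x`. -/
def circleLambda (a x : R) : R := x + a * x

lemma add_add_mul_eq_add_circleLambda (a x : R) : a + x + a * x = a + circleLambda a x :=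
  add_assoc a x (a * x)

lemma circleLambda_leftInverse {a b : R} (h : a + b + a * b = 0) :
    Function.LeftInverse (circleLambda a) (circleLambda b) := fun x =>
  calc circleLambda a (circleLambda b x) = x + (a + b + a * b) * x := by
        simp only [circleLambda]; noncomm_ring
    _ = x := by rw [h, zero_mul, add_zero]

lemma IsQuasiregular.circleLambda_bijective {a : R} (ha : IsQuasiregular a) :
    Function.Bijective (circleLambda a) := by
  obtain ⟨b, hab, hba⟩ := isQuasiregular_iff_circle.mp ha
  exact ⟨(circleLambda_leftInverse hba).injective,
    (circleLambda_leftInverse hab).surjective⟩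

variable {σ τ : Type*} [SetLike σ R] [SetLike τ R] {S : σ} {I : τ}

lemma circleLambda_mem [AddMemClass τ R] (hleft : ∀ r x : R, x ∈ I → r * x ∈ I) (a : R) {x : R}
    (hx : x ∈ I) :
    circleLambda a x ∈ I :=
  add_mem hx (hleft a x hx)

lemma eq_and_eq_of_add_eq_add [AddSubgroupClass σ R] [AddSubgroupClass τ R]
    (hint : ∀ x : R, x ∈ S → x ∈ I → x = 0)
    {s₁ s₂ i₁ i₂ : R} (hs₁ : s₁ ∈ S) (hs₂ : s₂ ∈ S) (hi₁ : i₁ ∈ I) (hi₂ : i₂ ∈ I)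
    (h : s₁ + i₁ = s₂ + i₂) : s₁ = s₂ ∧ i₁ = i₂ := by
  have hdiff : s₁ - s₂ = i₂ - i₁ := by rw [sub_eq_sub_iff_add_eq_add, h, add_comm]
  have hzero : s₁ - s₂ = 0 :=
    hint _ (sub_mem hs₁ hs₂) (hdiff ▸ sub_mem hi₂ hi₁)
  rw [hzero, eq_comm, sub_eq_zero] at hdiff
  exact ⟨sub_eq_zero.mp hzero, hdiff.symm⟩

lemma exists_circle_factorization [AddMemClass τ R] (hleft : ∀ r x : R, x ∈ I → r * x ∈ I)
    (hsum : ∀ r : R, ∃ s ∈ S, ∃ i ∈ I, r = s + i) (hS : ∀ s ∈ S, IsQuasiregular s) (r : R) :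
    ∃ s ∈ S, ∃ j ∈ I, r = s + j + s * j := by
  obtain ⟨s, hs, i, hi, rfl⟩ := hsum r
  obtain ⟨s', hss', -⟩ := isQuasiregular_iff_circle.mp (hS s hs)
  refine ⟨s, hs, circleLambda s' i, circleLambda_mem hleft s' hi, ?_⟩
  rw [add_add_mul_eq_add_circleLambda, circleLambda_leftInverse hss']

lemma circle_factorization_unique [AddSubgroupClass σ R] [AddSubgroupClass τ R]
    (hleft : ∀ r x : R, x ∈ I → r * x ∈ I)
    (hint : ∀ x : R, x ∈ S → x ∈ I → x = 0) (hS : ∀ s ∈ S, IsQuasiregular s)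
    {s₁ s₂ i₁ i₂ : R} (hs₁ : s₁ ∈ S) (hs₂ : s₂ ∈ S) (hi₁ : i₁ ∈ I) (hi₂ : i₂ ∈ I)
    (h : s₁ + i₁ + s₁ * i₁ = s₂ + i₂ + s₂ * i₂) : s₁ = s₂ ∧ i₁ = i₂ := by
  rw [add_add_mul_eq_add_circleLambda, add_add_mul_eq_add_circleLambda] at h
  obtain ⟨rfl, hlam⟩ := eq_and_eq_of_add_eq_add hint hs₁ hs₂
    (circleLambda_mem hleft s₁ hi₁) (circleLambda_mem hleft s₂ hi₂) h
  exact ⟨rfl, (hS s₁ hs₁).circleLambda_bijective.injective hlam⟩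

end CircleFactorization

/-- Let `R` be a ring, `S` a subring and `I` a left ideal with `S ∩ I = 0`,
`R = S + I`, and `S`, `I` Jacobson radical (every element has a quasi-inverse for
`a ∘ b = a + b + a·b`). Then `(R,∘)` is a group and `R = S ∘ I` is an exact
factorization: every `r` is uniquely `s ∘ i` with `s ∈ S`, `i ∈ I`. -/
theorem circleGroup_exact_factorization {R : Type*} [NonUnitalRing R]
    (S I : NonUnitalSubring R)
    (hleft : ∀ r x : R, x ∈ I → r * x ∈ I)
    (hint : ∀ x : R, x ∈ S → x ∈ I → x = 0)
    (hsum : ∀ r : R, ∃ s ∈ S, ∃ i ∈ I, r = s + i)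
    (hS : ∀ s ∈ S, ∃ s' ∈ S, s + s' + s * s' = 0 ∧ s' + s + s' * s = 0)
    (hI : ∀ i ∈ I, ∃ i' ∈ I, i + i' + i * i' = 0 ∧ i' + i + i' * i = 0) :
    (∀ r : R, ∃ r' : R, r + r' + r * r' = 0 ∧ r' + r + r' * r = 0) ∧
    (∀ r : R, ∃! p : S × I, r = (p.1 : R) + (p.2 : R) + (p.1 : R) * (p.2 : R)) := by
  have hSq : ∀ s ∈ S, IsQuasiregular s := fun s hs =>
    let ⟨s', _, hs'⟩ := hS s hs; isQuasiregular_iff_circle.mpr ⟨s', hs'⟩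
  have hIq : ∀ i ∈ I, IsQuasiregular i := fun i hi =>
    let ⟨i', _, hi'⟩ := hI i hi; isQuasiregular_iff_circle.mpr ⟨i', hi'⟩
  have hfac := exists_circle_factorization hleft hsum hSq
  refine ⟨fun r => ?_, fun r => ?_⟩
  · obtain ⟨s, hs, i, hi, rfl⟩ := hfac r
    exact isQuasiregular_iff_circle.mp ((hSq s hs).circle (hIq i hi))
  · obtain ⟨s, hs, i, hi, rfl⟩ := hfac r
    refine ⟨(⟨s, hs⟩, ⟨i, hi⟩), rfl, ?_⟩
    rintro ⟨⟨s', hs'⟩, ⟨i', hi'⟩⟩ h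
    obtain ⟨rfl, rfl⟩ := circle_factorization_unique hleft hint hSq hs' hs hi' hi h.symm
    rfl
end

section
/- Let N be a near-ring with identity and M a construction subgroup of N. Then M is a skew brace under m·m' = m+m' and m∘m' = m + (1+m)·m'. -/
namespace NearRing

variable {N : Type*} [AddGroup N] [Monoid N]

def circ (a b : N) : N := a + (1 + a) * b

theorem mul_zero_of_mul_add (hd : ∀ x y z : N, x * (y + z) = x * y + x * z) (x : N) :
    x * 0 = 0 := by
  have h : x * 0 + 0 = x * 0 + x * 0 := by rw [add_zero, ← hd, add_zero]
  exact (add_left_cancel h).symm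

theorem one_add_circ (hd : ∀ x y z : N, x * (y + z) = x * y + x * z) (a b : N) :
    1 + circ a b = (1 + a) * (1 + b) := by
  rw [circ, hd, mul_one, add_assoc]

theorem circ_assoc (hd : ∀ x y z : N, x * (y + z) = x * y + x * z) (a b c : N) :
    circ (circ a b) c = circ a (circ b c) := by
  apply add_left_cancel (a := (1 : N))
  rw [one_add_circ hd, one_add_circ hd, one_add_circ hd, one_add_circ hd, mul_assoc]

theorem zero_circ (a : N) : circ 0 a = a := by
  rw [circ, zero_add, add_zero, one_mul]

theorem circ_zero (hd : ∀ x y z : N, x * (y + z) = x * y + x * z) (a : N) : circ a 0 = a := by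
  rw [circ, mul_zero_of_mul_add hd, add_zero]

theorem circ_eq_zero_of_mul_eq_one (hd : ∀ x y z : N, x * (y + z) = x * y + x * z) {a b : N}
    (h : (1 + a) * (1 + b) = 1) : circ a b = 0 := by
  apply add_left_cancel (a := (1 : N))
  rw [one_add_circ hd, h, add_zero]

theorem circ_add (hd : ∀ x y z : N, x * (y + z) = x * y + x * z) (a b c : N) :
    circ a (b + c) = circ a b + -a + circ a c := by
  rw [circ, circ, circ, hd, add_assoc (a + _), neg_add_cancel_left, add_assoc]

theorem circ_mem (hd : ∀ x y z : N, x * (y + z) = x * y + x * z) {M : AddSubgroup N}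
    (hmul : ∀ m ∈ M, ∀ m' ∈ M, -1 + ((1 : N) + m) * (1 + m') ∈ M)
    {a b : N} (ha : a ∈ M) (hb : b ∈ M) : circ a b ∈ M := by
  simpa only [← one_add_circ hd, neg_add_cancel_left] using hmul a ha b hb

noncomputable def constructionSkewBrace (hd : ∀ x y z : N, x * (y + z) = x * y + x * z)
    (M : AddSubgroup N) (hmul : ∀ m ∈ M, ∀ m' ∈ M, -1 + ((1 : N) + m) * (1 + m') ∈ M)
    (hinv : ∀ m ∈ M, ∃ m' ∈ M, ((1 : N) + m) * (1 + m') = 1 ∧ ((1 : N) + m') * (1 + m) = 1) :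
    SkewBrace (Multiplicative M) where
  circ a b := .ofAdd ⟨circ a.toAdd b.toAdd, circ_mem hd hmul a.toAdd.2 b.toAdd.2⟩
  circ_assoc _ _ _ := Subtype.ext (circ_assoc hd _ _ _)
  cone := .ofAdd 0
  cone_circ _ := Subtype.ext (zero_circ _)
  circ_cone _ := Subtype.ext (circ_zero hd _)
  cinv a := .ofAdd ⟨(hinv _ a.toAdd.2).choose, (hinv _ a.toAdd.2).choose_spec.1⟩
  cinv_circ a := Subtype.ext (circ_eq_zero_of_mul_eq_one hd (hinv _ a.toAdd.2).choose_spec.2.2)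
  circ_cinv a := Subtype.ext (circ_eq_zero_of_mul_eq_one hd (hinv _ a.toAdd.2).choose_spec.2.1)
  compat _ _ _ := Subtype.ext (circ_add hd _ _ _)

end NearRing

theorem nearRing_construction_subgroup_skewBrace_general {N : Type*} [AddGroup N] [Monoid N]
    (hd : ∀ x y z : N, x * (y + z) = x * y + x * z)
    (M : AddSubgroup N)
    (h2 : ∀ m ∈ M, ∀ m' ∈ M, -1 + ((1 : N) + m) * (1 + m') ∈ M)
    (h3 : ∀ m ∈ M, ∃ m' ∈ M, ((1 : N) + m) * (1 + m') = 1 ∧ ((1 : N) + m') * (1 + m) = 1) :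
    ∃ B : SkewBrace (Multiplicative M), ∀ m m' : M,
      ((Multiplicative.toAdd
        (B.circ (Multiplicative.ofAdd m) (Multiplicative.ofAdd m')) : M) : N)
        = (m : N) + ((1 : N) + (m : N)) * (m' : N) :=
  ⟨NearRing.constructionSkewBrace hd M h2 h3, fun _ _ => rfl⟩

/-- A construction subgroup `M` of a near-ring `N` is a skew brace with
`m · m' = m + m'` and `m ∘ m' = m + (1+m)·m'`. -/
theorem nearRing_construction_subgroup_skewBrace {N : Type*} [AddGroup N] [Monoid N]
    (hd : ∀ x y z : N, x * (y + z) = x * y + x * z)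
    (M : AddSubgroup N)
    (h1 : ∀ m ∈ M, IsUnit ((1 : N) + m))
    (h2 : ∀ m ∈ M, ∀ m' ∈ M, -1 + ((1 : N) + m) * (1 + m') ∈ M)
    (h3 : ∀ m ∈ M, ∃ m' ∈ M, ((1 : N) + m) * (1 + m') = 1 ∧ ((1 : N) + m') * (1 + m) = 1) :
    ∃ B : SkewBrace (Multiplicative M), ∀ m m' : M,
      ((Multiplicative.toAdd
        (B.circ (Multiplicative.ofAdd m) (Multiplicative.ofAdd m')) : M) : N)
        = (m : N) + ((1 : N) + (m : N)) * (m' : N) :=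
  nearRing_construction_subgroup_skewBrace_general hd M h2 h3
end

section
/- Let A and B be skew braces and α : (A,∘) → Aut_Br(B) a homomorphism into the group of skew brace automorphisms of B. Then A × B with (a,b)(a',b') = (a·a', b·b') and (a,b)∘(a',b') = (a∘a', b∘α_a(b')) is a skew brace. -/
namespace SkewBrace

variable {A : Type*} [Group A]

theorem eq_cone_of_circ_self (S : SkewBrace A) {x : A} (hx : S.circ x x = x) : x = S.cone := by
  have h := congrArg (S.circ (S.cinv x)) hx
  rwa [← S.circ_assoc, S.cinv_circ, S.cone_circ] at h

theorem map_cone_of_map_circ {B : Type*} [Group B] (SA : SkewBrace A) (SB : SkewBrace B)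
    (f : A → B) (hf : ∀ a a' : A, f (SA.circ a a') = SB.circ (f a) (f a')) :
    f SA.cone = SB.cone :=
  SB.eq_cone_of_circ_self (by rw [← hf, SA.cone_circ])

theorem apply_cone_eq_self {B : Type*} (SA : SkewBrace A) (α : A → B ≃ B)
    (hhom : ∀ a a' : A, ∀ b : B, α (SA.circ a a') b = α a (α a' b)) (b : B) :
    α SA.cone b = b :=
  (α SA.cone).injective (by rw [← hhom, SA.cone_circ])

def semidirectProduct {B : Type*} [Group B] (SA : SkewBrace A) (SB : SkewBrace B)
    (α : A → B ≃ B)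
    (hmul : ∀ a : A, ∀ b b' : B, α a (b * b') = α a b * α a b')
    (hcirc : ∀ a : A, ∀ b b' : B, α a (SB.circ b b') = SB.circ (α a b) (α a b'))
    (hhom : ∀ a a' : A, ∀ b : B, α (SA.circ a a') b = α a (α a' b)) :
    SkewBrace (A × B) where
  circ p q := (SA.circ p.1 q.1, SB.circ p.2 (α p.1 q.2))
  circ_assoc p q r := Prod.ext (SA.circ_assoc _ _ _) <| by
    simp only [hcirc, hhom, SB.circ_assoc]
  cone := (SA.cone, SB.cone)
  cone_circ p := Prod.ext (SA.cone_circ _) <| by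
    simp only [apply_cone_eq_self SA α hhom, SB.cone_circ]
  circ_cone p := Prod.ext (SA.circ_cone _) <| by
    simp only [map_cone_of_map_circ SB SB _ (hcirc p.1), SB.circ_cone]
  cinv p := (SA.cinv p.1, α (SA.cinv p.1) (SB.cinv p.2))
  cinv_circ p := Prod.ext (SA.cinv_circ _) <| by
    simp only [← hcirc, SB.cinv_circ, map_cone_of_map_circ SB SB _ (hcirc _)]
  circ_cinv p := Prod.ext (SA.circ_cinv _) <| by
    simp only [← hhom, SA.circ_cinv, apply_cone_eq_self SA α hhom, SB.circ_cinv]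
  compat p q r := Prod.ext (SA.compat _ _ _) <| by
    simp only [Prod.snd_mul, Prod.snd_inv, hmul, SB.compat]

end SkewBrace

/-- Semidirect product of skew braces: if `(A,∘)` acts on the skew brace `B` by
brace automorphisms `α`, then `A × B` with componentwise `·` and
`(a,b) ∘ (a',b') = (a ∘ a', b ∘ α_a(b'))` is a skew brace. -/
theorem skewBrace_semidirect {A B : Type*} [Group A] [Group B]
    (SA : SkewBrace A) (SB : SkewBrace B) (α : A → B ≃ B)
    (hmul : ∀ a : A, ∀ b b' : B, α a (b * b') = α a b * α a b')
    (hcirc : ∀ a : A, ∀ b b' : B, α a (SB.circ b b') = SB.circ (α a b) (α a b'))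
    (hhom : ∀ a a' : A, ∀ b : B, α (SA.circ a a') b = α a (α a' b)) :
    ∃ C : SkewBrace (A × B), ∀ p q : A × B,
      C.circ p q = (SA.circ p.1 q.1, SB.circ p.2 (α p.1 q.2)) :=
  ⟨SkewBrace.semidirectProduct SA SB α hmul hcirc hhom, fun _ _ => rfl⟩
end

section
/- Let A be a skew brace. Then r : A × A → A × A, r(a,b) = (λ_a(b), λ_{λ_a(b)}⁻¹((a∘b)⁻¹·a·(a∘b))), is a bijective solution of the Yang–Baxter equation: (r×id)(id×r)(r×id) = (id×r)(r×id)(id×r). Moreover r is involutive (r² = id) if and only if a·b = b·a for all a,b ∈ A. -/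
/-!
The map `φ(a, b) = (a, a ∘ b)` is a bijection of `A × A`, and it turns `r` into the map
`(x, s) ↦ (x⁻¹ s, s)` of the additive group alone; this map is bijective, and it is an involution
exactly when all conjugations are trivial. Likewise `(a, b, c) ↦ (a, a ∘ b, a ∘ b ∘ c)` turns
`r × id` and `id × r` into `(x, s, t) ↦ (x⁻¹ s, s, t)` and `(x, s, t) ↦ (x, x s⁻¹ t, t)`, which
satisfy the braid relation in any group.
-/

namespace Function.Semiconj

variable {α β : Type*} {f : α → β} {ga ga' : α → α} {gb : β → β}

theorem bijective_iff (h : Semiconj f ga gb) (hf : Bijective f) :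
    Bijective ga ↔ Bijective gb := by
  rw [← hf.of_comp_iff' ga, h.comp_eq, Bijective.of_comp_iff gb hf]

theorem comp_self_eq_id_iff (h : Semiconj f ga gb) (hf : Bijective f) :
    ga ∘ ga = id ↔ gb ∘ gb = id := by
  rw [← hf.injective.comp_left.eq_iff, ← hf.surjective.injective_comp_right.eq_iff]
  simp only [(h.comp_right h).comp_eq, comp_id, id_comp]

theorem eq_of_injective (h : Semiconj f ga gb) (h' : Semiconj f ga' gb) (hf : Injective f) :
    ga = ga' :=
  hf.comp_left <| h.comp_eq.trans h'.comp_eq.symm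

end Function.Semiconj

section GroupMaps

variable {G : Type*} [Group G]

def leftDivMap (p : G × G) : G × G := (p.1⁻¹ * p.2, p.2)

theorem leftDivMap_bijective : Function.Bijective (leftDivMap (G := G)) :=
  Function.bijective_iff_has_inverse.2
    ⟨fun p => (p.2 * p.1⁻¹, p.2), fun p => by simp [leftDivMap], fun p => by simp [leftDivMap]⟩

theorem leftDivMap_comp_self_eq_id_iff :
    leftDivMap (G := G) ∘ leftDivMap = id ↔ ∀ a b : G, a * b = b * a := by
  simp only [funext_iff, Prod.forall, Function.comp_apply, id_eq, leftDivMap, Prod.mk.injEq,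
    and_true, mul_inv_rev, inv_inv, mul_assoc, inv_mul_eq_iff_eq_mul]

def braidMap₁ (p : G × G × G) : G × G × G := (p.1⁻¹ * p.2.1, p.2.1, p.2.2)

def braidMap₂ (p : G × G × G) : G × G × G := (p.1, p.1 * p.2.1⁻¹ * p.2.2, p.2.2)

theorem braidMap_braid :
    braidMap₁ ∘ braidMap₂ ∘ braidMap₁ = braidMap₂ ∘ braidMap₁ ∘ (braidMap₂ (G := G)) := by
  funext p
  simp only [Function.comp_apply, braidMap₁, braidMap₂, Prod.mk.injEq]
  exact ⟨by group, by group, trivial⟩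

end GroupMaps

namespace SkewBrace

variable {A : Type*} [Group A] (B : SkewBrace A)

theorem cinv_circ_circ (a x : A) : B.circ (B.cinv a) (B.circ a x) = x := by
  rw [← B.circ_assoc, B.cinv_circ, B.cone_circ]

theorem circ_cinv_circ (a x : A) : B.circ a (B.circ (B.cinv a) x) = x := by
  rw [← B.circ_assoc, B.circ_cinv, B.cone_circ]

theorem circ_injective (a : A) : Function.Injective (B.circ a) :=
  Function.LeftInverse.injective (g := B.circ (B.cinv a)) (cinv_circ_circ B a)

theorem circ_inv (a b : A) : B.circ a b⁻¹ = a * (B.circ a b)⁻¹ * a := by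
  have h := B.compat a b b⁻¹
  rw [mul_inv_cancel, circ_one] at h
  calc B.circ a b⁻¹ = a * (B.circ a b)⁻¹ * (B.circ a b * a⁻¹ * B.circ a b⁻¹) := by group
    _ = a * (B.circ a b)⁻¹ * a := by rw [← h]

theorem lambda_injective (a : A) : Function.Injective (B.lambda a) :=
  (mul_right_injective a⁻¹).comp (circ_injective B a)

theorem lambda_circ_cinv (a y : A) : B.lambda a (B.circ (B.cinv a) (a * y)) = y := by
  rw [lambda, circ_cinv_circ, inv_mul_cancel_left]

theorem invFun_lambda (a y : A) :
    Function.invFun (B.lambda a) y = B.circ (B.cinv a) (a * y) :=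
  lambda_injective B a <| by
    rw [Function.invFun_eq ⟨_, lambda_circ_cinv B a y⟩, lambda_circ_cinv]

theorem circ_lambda (a b c : A) :
    B.circ a (B.lambda b c) = a * (B.circ a b)⁻¹ * B.circ a (B.circ b c) := by
  rw [lambda, B.compat, circ_inv]
  group

theorem lambda_mul_conj_eq_circ (a b : A) :
    B.lambda a b * ((B.circ a b)⁻¹ * a * B.circ a b) = B.circ a b := by
  rw [lambda]
  group

def solution (p : A × A) : A × A :=
  (B.lambda p.1 p.2, B.circ (B.cinv (B.lambda p.1 p.2)) (B.circ p.1 p.2))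

theorem circ_solution (a b : A) :
    B.circ (B.solution (a, b)).1 (B.solution (a, b)).2 = B.circ a b :=
  circ_cinv_circ B _ _

def circShear (p : A × A) : A × A := (p.1, B.circ p.1 p.2)

theorem circShear_bijective : Function.Bijective B.circShear :=
  Function.bijective_iff_has_inverse.2
    ⟨fun p => (p.1, B.circ (B.cinv p.1) p.2), fun p => by simp [circShear, cinv_circ_circ],
      fun p => by simp [circShear, circ_cinv_circ]⟩

theorem semiconj_circShear_solution : Function.Semiconj B.circShear B.solution leftDivMap :=
  fun p => Prod.ext rfl (circ_solution B p.1 p.2)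

def circShear₃ (p : A × A × A) : A × A × A :=
  (p.1, B.circ p.1 p.2.1, B.circ p.1 (B.circ p.2.1 p.2.2))

theorem circShear₃_injective : Function.Injective B.circShear₃ := by
  rintro ⟨a, b, c⟩ ⟨a', b', c'⟩ h
  simp only [circShear₃, Prod.mk.injEq] at h
  obtain ⟨rfl, hb, hc⟩ := h
  obtain rfl := circ_injective B a hb
  obtain rfl := circ_injective B b (circ_injective B a hc)
  rfl

theorem circShear₃_solution_left (a b c : A) :
    B.circShear₃ ((B.solution (a, b)).1, (B.solution (a, b)).2, c) =
      braidMap₁ (B.circShear₃ (a, b, c)) :=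
  Prod.ext rfl <| Prod.ext (circ_solution B a b) <| by
    simp only [circShear₃, braidMap₁, ← B.circ_assoc, circ_solution]

theorem circShear₃_solution_right (a b c : A) :
    B.circShear₃ (a, B.solution (b, c)) = braidMap₂ (B.circShear₃ (a, b, c)) :=
  Prod.ext rfl <| Prod.ext (circ_lambda B a b c) (congrArg (B.circ a) (circ_solution B b c))

end SkewBrace

open SkewBrace

/-- The canonical map `r(a,b) = (λ_a(b), λ_{λ_a(b)}⁻¹((a∘b)⁻¹·a·(a∘b)))` of a skew
brace is a bijective solution of the Yang–Baxter equation, and it is involutive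
iff the additive group is abelian. -/
theorem skewBrace_yangBaxter {A : Type*} [Group A] (B : SkewBrace A) :
    ∀ r : A × A → A × A,
      (∀ a b : A, r (a, b) = (a⁻¹ * B.circ a b,
        Function.invFun
          (fun x => (a⁻¹ * B.circ a b)⁻¹ * B.circ (a⁻¹ * B.circ a b) x)
          ((B.circ a b)⁻¹ * a * B.circ a b))) →
      ∀ r1 r2 : A × A × A → A × A × A,
        (∀ p, r1 p = ((r (p.1, p.2.1)).1, (r (p.1, p.2.1)).2, p.2.2)) →
        (∀ p, r2 p = (p.1, r p.2)) →
        Function.Bijective r ∧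
        (r1 ∘ r2 ∘ r1 = r2 ∘ r1 ∘ r2) ∧
        ((r ∘ r = id) ↔ ∀ a b : A, a * b = b * a) := by
  intro r hr r1 r2 hr1 hr2
  obtain rfl : r = B.solution := by
    funext ⟨a, b⟩
    rw [hr]
    show (B.lambda a b, Function.invFun (B.lambda (B.lambda a b)) _) = _
    rw [invFun_lambda, lambda_mul_conj_eq_circ]
    rfl
  have h₁ : Function.Semiconj B.circShear₃ r1 braidMap₁ := fun p => by
    rw [hr1]
    exact circShear₃_solution_left B _ _ _
  have h₂ : Function.Semiconj B.circShear₃ r2 braidMap₂ := fun p => by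
    rw [hr2]
    exact circShear₃_solution_right B _ _ _
  have hφ := semiconj_circShear_solution B
  refine ⟨(hφ.bijective_iff (circShear_bijective B)).2 leftDivMap_bijective, ?_, ?_⟩
  · refine (h₁.comp_right (h₂.comp_right h₁)).eq_of_injective ?_ (circShear₃_injective B)
    rw [braidMap_braid]
    exact h₂.comp_right (h₁.comp_right h₂)
  · rw [hφ.comp_self_eq_id_iff (circShear_bijective B), leftDivMap_comp_self_eq_id_iff]
end

section
/- Let A be a finite skew brace with more than one element, and let r be its canonical Yang–Baxter solution. Then the order of r as a permutation of A × A equals 2d, where d is the exponent of the quotient group (A,·)/Z(A,·) of the additive group by its center. In particular, the order of r is even. -/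
/-!
Transport `r` along the bijection `(a, b) ↦ (a, a ∘ b)` of `A × A`. Since `λ_a(b) ∘ r₂ = a ∘ b`,
`r` preserves `s = a ∘ b`, and the conjugated map is `φ (x, s) = (x⁻¹ · s, s)`, which no longer
involves `∘`. Now `φ²` is conjugation by `s` in the second coordinate, so `φ^(2k) = 1` exactly
when every `k`-th power is central, i.e. when the exponent `d` of `A ⧸ Z(A)` divides `k`; and
`φ^(2k+1) (1, s) = (s, s)`, so odd powers of `φ` are never the identity on a nontrivial group.
-/

theorem Function.End.mul_apply {α : Type*} (f g : Function.End α) (a : α) :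
    (f * g) a = f (g a) :=
  rfl

def Equiv.endCongr {α β : Type*} (e : α ≃ β) : Function.End α ≃* Function.End β :=
  { e.conj with map_mul' := e.conj_comp }

theorem QuotientGroup.exponent_dvd_iff_forall_pow_mem {G : Type*} [Group G] (N : Subgroup G)
    [N.Normal] {k : ℕ} : Monoid.exponent (G ⧸ N) ∣ k ↔ ∀ g : G, g ^ k ∈ N := by
  simp only [Monoid.exponent_dvd_iff_forall_pow_eq_one, QuotientGroup.mk_surjective.forall,
    ← QuotientGroup.mk_pow, QuotientGroup.eq_one_iff]

theorem orderOf_eq_of_forall_pow_eq_one_iff {M : Type*} [Monoid M] {x : M} {m : ℕ}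
    (h : ∀ n, x ^ n = 1 ↔ m ∣ n) : orderOf x = m :=
  Nat.dvd_antisymm (orderOf_dvd_of_pow_eq_one ((h m).mpr dvd_rfl))
    ((h _).mp (pow_orderOf_eq_one x))

section invMulSnd

variable {G : Type*} [Group G]

variable (G) in
def invMulSnd : Function.End (G × G) := fun p => (p.1⁻¹ * p.2, p.2)

theorem invMulSnd_sq_apply (x s : G) : (invMulSnd G ^ 2) (x, s) = (s⁻¹ * x * s, s) := by
  simp [pow_two, Function.End.mul_apply, invMulSnd, mul_assoc]

theorem invMulSnd_pow_two_mul_apply (k : ℕ) (x s : G) :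
    (invMulSnd G ^ (2 * k)) (x, s) = ((s ^ k)⁻¹ * x * s ^ k, s) := by
  induction k with
  | zero => simp [Function.End.one_def]
  | succ k ih =>
    rw [Nat.mul_succ, pow_add, pow_mul_comm, Function.End.mul_apply, invMulSnd_sq_apply, ih]
    group

theorem invMulSnd_pow_two_mul_add_one_apply_one (k : ℕ) (s : G) :
    (invMulSnd G ^ (2 * k + 1)) (1, s) = (s, s) := by
  rw [pow_succ', Function.End.mul_apply, invMulSnd_pow_two_mul_apply]
  simp [invMulSnd]

theorem invMulSnd_pow_two_mul_apply_eq_self_iff (k : ℕ) (x s : G) :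
    (invMulSnd G ^ (2 * k)) (x, s) = (x, s) ↔ x * s ^ k = s ^ k * x := by
  rw [invMulSnd_pow_two_mul_apply, Prod.mk.injEq, mul_assoc, inv_mul_eq_iff_eq_mul]
  simp

theorem invMulSnd_pow_two_mul_eq_one_iff {k : ℕ} :
    invMulSnd G ^ (2 * k) = 1 ↔ Monoid.exponent (G ⧸ Subgroup.center G) ∣ k := by
  simp only [QuotientGroup.exponent_dvd_iff_forall_pow_mem, Subgroup.mem_center_iff]
  exact ⟨fun h s x => (invMulSnd_pow_two_mul_apply_eq_self_iff k x s).mp (congrFun h (x, s)),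
    fun h => funext fun ⟨x, s⟩ => (invMulSnd_pow_two_mul_apply_eq_self_iff k x s).mpr (h s x)⟩

theorem invMulSnd_pow_two_mul_add_one_ne_one [Nontrivial G] (k : ℕ) :
    invMulSnd G ^ (2 * k + 1) ≠ 1 := by
  intro h
  obtain ⟨s, hs⟩ := exists_ne (1 : G)
  have hfst := congrArg Prod.fst (invMulSnd_pow_two_mul_add_one_apply_one k s)
  rw [h] at hfst
  exact hs hfst.symm

theorem invMulSnd_pow_eq_one_iff [Nontrivial G] {n : ℕ} :
    invMulSnd G ^ n = 1 ↔ 2 * Monoid.exponent (G ⧸ Subgroup.center G) ∣ n := by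
  obtain ⟨k, rfl | rfl⟩ := Nat.even_or_odd' n
  · rw [invMulSnd_pow_two_mul_eq_one_iff, Nat.mul_dvd_mul_iff_left two_pos]
  · exact iff_of_false (invMulSnd_pow_two_mul_add_one_ne_one k) fun h =>
      Nat.not_even_two_mul_add_one k (even_iff_two_dvd.mpr ((dvd_mul_right 2 _).trans h))

end invMulSnd

namespace SkewBrace

variable {A : Type*} [Group A] (B : SkewBrace A)

theorem cinv_circ_cancel_left (a b : A) : B.circ (B.cinv a) (B.circ a b) = b := by
  rw [← B.circ_assoc, B.cinv_circ, B.cone_circ]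

theorem circ_cinv_cancel_left (a b : A) : B.circ a (B.circ (B.cinv a) b) = b := by
  rw [← B.circ_assoc, B.circ_cinv, B.cone_circ]

def prodCircEquiv : A × A ≃ A × A where
  toFun p := (p.1, B.circ p.1 p.2)
  invFun p := (p.1, B.circ (B.cinv p.1) p.2)
  left_inv p := by simp [cinv_circ_cancel_left]
  right_inv p := by simp [circ_cinv_cancel_left]

theorem prodCircEquiv_endCongr_eq_invMulSnd {r : Function.End (A × A)}
    (hr : ∀ a b : A, r (a, b) = (a⁻¹ * B.circ a b,
      B.circ (B.cinv (a⁻¹ * B.circ a b)) (B.circ a b))) :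
    B.prodCircEquiv.endCongr r = invMulSnd A := by
  funext ⟨x, s⟩
  change B.prodCircEquiv (r (B.prodCircEquiv.symm (x, s))) = _
  simp only [prodCircEquiv, Equiv.coe_fn_mk, Equiv.coe_fn_symm_mk, hr, circ_cinv_cancel_left,
    invMulSnd]

end SkewBrace

theorem skewBrace_r_order_general {A : Type*} [Group A] [Nontrivial A]
    (B : SkewBrace A) (r : Function.End (A × A))
    (hr : ∀ a b : A, r (a, b) = (a⁻¹ * B.circ a b,
      B.circ (B.cinv (a⁻¹ * B.circ a b)) (B.circ a b))) :
    orderOf r = 2 * Monoid.exponent (A ⧸ Subgroup.center A) := by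
  rw [← B.prodCircEquiv.endCongr.orderOf_eq r, B.prodCircEquiv_endCongr_eq_invMulSnd hr]
  exact orderOf_eq_of_forall_pow_eq_one_iff fun n => invMulSnd_pow_eq_one_iff

/-- The order of the canonical Yang–Baxter solution of a finite skew brace with more
than one element equals `2d`, where `d` is the exponent of the additive group modulo
its center. -/
theorem skewBrace_r_order {A : Type*} [Group A] [Finite A] [Nontrivial A]
    (B : SkewBrace A) (r : Function.End (A × A))
    (hr : ∀ a b : A, r (a, b) = (a⁻¹ * B.circ a b,
      B.circ (B.cinv (a⁻¹ * B.circ a b)) (B.circ a b))) :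
    orderOf r = 2 * Monoid.exponent (A ⧸ Subgroup.center A) :=
  skewBrace_r_order_general B r hr
end
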